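/- arXiv:1811.08313 — 2 statements merged into one kernel-verified Lean document; each statement's English description precedes it below -/
import Mathlib

section
/- With the hypotheses of the perturbation lemma, assume in addition that $A_1$ is not almost surely constant, the sequence $(q_n)$ is not constant, and $p_n > 0$ for every $n$. Then the inequality is strict: $\mathbb{E}\big[\sum_{n\ge1} \tilde p_n q_n\big] < \sum_{n\ge1} p_n q_n$. -/
open MeasureTheory ProbabilityTheory Filter

/-!
Write `S = ∑ k, A k * p k` and `c n = 𝔼[A n / S]`. Then `𝔼[∑ p̃ n q n] = ∑ p n c n q n` and
`∑ p n c n = 1`, so the claim is `∑ p n q n (1 - c n) > 0` where `∑ p n (1 - c n) = 0`.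
Exchanging the i.i.d. coordinates `A i` and `A j` shows that `c i - c j` is a negative multiple
of `p i - p j`, so `1 - c` is antitone like `q`, and strictly decreasing where `p` is. For two
antitone sequences this is a Chebyshev-type sum inequality: subtracting `q N`, where `N` is the
first index with `1 - c N < 0`, makes every term of the sum nonnegative.
-/

lemma HasSum.comp_swap_mul {ι : Type*} [DecidableEq ι] {a w : ι → ℝ} {s : ℝ}
    (h : HasSum (fun k => a k * w k) s) {i j : ι} (hij : i ≠ j) :
    HasSum (fun k => a (Equiv.swap i j k) * w k) (s + (a j - a i) * (w i - w j)) := by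
  have hfin :
      HasSum (fun k => (a (Equiv.swap i j k) - a k) * w k) ((a j - a i) * (w i - w j)) := by
    convert (hasSum_sum_of_ne_finset_zero (s := {i, j}) ?_ :
      HasSum (fun k => (a (Equiv.swap i j k) - a k) * w k) _) using 1
    · rw [Finset.sum_pair hij, Equiv.swap_apply_left, Equiv.swap_apply_right]
      ring
    · intro k hk
      simp only [Finset.mem_insert, Finset.mem_singleton, not_or] at hk
      rw [Equiv.swap_apply_of_ne_of_ne hk.1 hk.2, sub_self, zero_mul]
  convert h.add hfin using 1
  funext k
  ring

lemma pos_of_hasSum_mul_mul_of_antitone {w a b : ℕ → ℝ} {s : ℝ} (hw : ∀ n, 0 < w n)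
    (ha : Antitone a) (hb : Antitone b) (hwb : HasSum (fun n => w n * b n) 0)
    (hwab : HasSum (fun n => w n * a n * b n) s) {j : ℕ} (haj : a j < a 0) (hbj : b j < b 0) :
    0 < s := by
  have hb0 : 0 < b 0 := by
    by_contra! hb0
    have hnonneg : ∀ n, 0 ≤ -(w n * b n) := fun n =>
      neg_nonneg.2 (mul_nonpos_of_nonneg_of_nonpos (hw n).le ((hb (Nat.zero_le n)).trans hb0))
    have hzero := (hasSum_zero_iff_of_nonneg hnonneg).1 (by simpa using hwb.neg)
    have := congr_fun hzero j
    simp only [Pi.zero_apply, neg_eq_zero, mul_eq_zero, (hw j).ne', false_or] at this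
    linarith
  have hneg : ∃ N, b N < 0 := by
    by_contra! hb_nonneg
    have hzero := (hasSum_zero_iff_of_nonneg fun n => mul_nonneg (hw n).le (hb_nonneg n)).1 hwb
    exact (mul_pos (hw 0) hb0).ne' (congr_fun hzero 0)
  classical
  set N := Nat.find hneg
  have hbN : b N < 0 := Nat.find_spec hneg
  have hterm : ∀ n, 0 ≤ w n * (a n - a N) * b n := fun n => by
    rcases lt_or_ge n N with hn | hn
    · exact mul_nonneg (mul_nonneg (hw n).le (sub_nonneg.2 (ha hn.le)))
        (not_lt.1 (Nat.find_min hneg hn))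
    · exact mul_nonneg_of_nonpos_of_nonpos
        (mul_nonpos_of_nonneg_of_nonpos (hw n).le (sub_nonpos.2 (ha hn))) ((hb hn).trans hbN.le)
  have hshift : HasSum (fun n => w n * (a n - a N) * b n) s := by
    have hfun : (fun n => w n * (a n - a N) * b n)
        = fun n => w n * a n * b n - a N * (w n * b n) := funext fun n => by ring
    simpa only [hfun, mul_zero, sub_zero] using hwab.sub (hwb.mul_left (a N))
  have hsummable := hshift.summable
  rw [← hshift.tsum_eq]
  rcases (ha (Nat.zero_le N)).lt_or_eq with haN | haN
  · exact hsummable.tsum_pos hterm 0 (mul_pos (mul_pos (hw 0) (sub_pos.2 haN)) hb0)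
  · have hNj : N < j := lt_of_not_ge fun hjN => (haN ▸ haj).not_ge (ha hjN)
    exact hsummable.tsum_pos hterm j (mul_pos_of_neg_of_neg
      (mul_neg_of_pos_of_neg (hw j) (sub_neg.2 (haN ▸ haj))) ((hb hNj.le).trans_lt hbN))

lemma hasSum_integral_mul_of_hasSum_one {Ω ι : Type*} [MeasurableSpace Ω] {P : Measure Ω}
    [IsFiniteMeasure P] [Countable ι] {F : ι → Ω → ℝ}
    (hF_meas : ∀ n, AEStronglyMeasurable (F n) P) (hF_nonneg : ∀ n ω, 0 ≤ F n ω)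
    (hF_sum : ∀ᵐ ω ∂P, HasSum (fun n => F n ω) 1) {r : ι → ℝ} {C : ℝ} (hr : ∀ n, |r n| ≤ C) :
    HasSum (fun n => (∫ ω, F n ω ∂P) * r n) (∫ ω, ∑' n, F n ω * r n ∂P) := by
  have hbound : ∀ n ω, ‖F n ω * r n‖ ≤ C * F n ω := fun n ω => by
    rw [Real.norm_eq_abs, abs_mul, abs_of_nonneg (hF_nonneg n ω), mul_comm]
    exact mul_le_mul_of_nonneg_right (hr n) (hF_nonneg n ω)
  simp only [← integral_mul_const]
  refine hasSum_integral_of_dominated_convergence (fun n ω => C * F n ω)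
    (fun n => (hF_meas n).mul_const _) (fun n => ae_of_all _ (hbound n)) ?_ ?_ ?_
  · filter_upwards [hF_sum] with ω hω using hω.summable.mul_left C
  · refine (integrable_const C).congr ?_
    filter_upwards [hF_sum] with ω hω
    rw [tsum_mul_left, hω.tsum_eq, mul_one]
  · filter_upwards [hF_sum] with ω hω
    exact ((hω.summable.mul_left C).of_norm_bounded fun n => hbound n ω).hasSum

lemma iIndepFun.integral_comp_precomp {Ω ι 𝓧 : Type*} [MeasurableSpace Ω] {P : Measure Ω}
    [MeasurableSpace 𝓧] {X : ι → Ω → 𝓧} (hX : ∀ i, Measurable (X i)) (hind : iIndepFun X P)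
    {μ : Measure 𝓧} (hμ : ∀ i, P.map (X i) = μ) {g : ι → ι} (hg : g.Injective)
    {G : (ι → 𝓧) → ℝ} (hG : Measurable G) :
    ∫ ω, G (fun i => X (g i) ω) ∂P = ∫ ω, G (fun i => X i ω) ∂P := by
  have hlaw : P.map (fun ω i => X (g i) ω) = P.map (fun ω i => X i ω) := by
    rw [(hind.precomp hg).map_fun_eq_infinitePi_map (fun i => hX (g i)),
      hind.map_fun_eq_infinitePi_map hX]
    simp only [hμ]
  rw [← integral_map (measurable_pi_iff.2 fun i => hX (g i)).aemeasurable
    hG.aestronglyMeasurable, hlaw, integral_map (measurable_pi_iff.2 hX).aemeasurable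
    hG.aestronglyMeasurable]

lemma IndepFun.exists_ae_eq_const_of_ae_eq {Ω 𝓧 : Type*} [MeasurableSpace Ω] {P : Measure Ω}
    [IsProbabilityMeasure P] [MeasurableSpace 𝓧] [StandardBorelSpace 𝓧] {X Y : Ω → 𝓧}
    (hX : Measurable X) (hXY : IndepFun X Y P) (hae : X =ᵐ[P] Y) :
    ∃ c, ∀ᵐ ω ∂P, X ω = c := by
  have hself : IndepFun X X P := hXY.congr (ae_eq_refl X) hae.symm
  have : IsZeroOneMeasure (P.map X) := ⟨fun s hs => by
    rw [Measure.map_apply hX hs]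
    exact measure_eq_zero_or_one_of_indepSet_self <|
      (indepSet_iff_measure_inter_eq_mul (hX hs) (hX hs) P).2 <|
        hself.measure_inter_preimage_eq_mul _ _ hs hs⟩
  have := Measure.isProbabilityMeasure_map (μ := P) hX.aemeasurable
  obtain ⟨c, hc⟩ := IsZeroOneMeasure.exists_eq_dirac (μ := P.map X)
  refine ⟨c, ae_of_ae_map (p := fun x => x = c) hX.aemeasurable ?_⟩
  rw [hc]
  exact (ae_dirac_iff (measurableSet_singleton c)).2 rfl

section WeightedSum

variable {x p : ℕ → ℝ}

lemma tsum_mul_pos (hx : ∀ k, 0 < x k) (hp : ∀ k, 0 < p k) (hs : Summable fun k => x k * p k) :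
    0 < ∑' k, x k * p k :=
  hs.tsum_pos (fun k => (mul_pos (hx k) (hp k)).le) 0 (mul_pos (hx 0) (hp 0))

lemma div_tsum_mul_le (hx : ∀ k, 0 < x k) (hp : ∀ k, 0 < p k) (hs : Summable fun k => x k * p k)
    (n : ℕ) : x n / ∑' k, x k * p k ≤ 1 / p n := by
  rw [div_le_div_iff₀ (tsum_mul_pos hx hp hs) (hp n), one_mul]
  exact hs.le_tsum n fun k _ => (mul_pos (hx k) (hp k)).le

noncomputable def normalizedDiff (p : ℕ → ℝ) (i j : ℕ) (x : ℕ → ℝ) : ℝ :=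
  (x i - x j) / ∑' k, x k * p k

lemma measurable_normalizedDiff (p : ℕ → ℝ) (i j : ℕ) : Measurable (normalizedDiff p i j) :=
  ((measurable_pi_apply i).sub (measurable_pi_apply j)).div
    (Measurable.tsum fun k => by fun_prop)

lemma abs_normalizedDiff_le (hx : ∀ k, 0 < x k) (hp : ∀ k, 0 < p k)
    (hs : Summable fun k => x k * p k) (i j : ℕ) :
    |normalizedDiff p i j x| ≤ 1 / p i + 1 / p j := by
  have hS := tsum_mul_pos hx hp hs
  calc |normalizedDiff p i j x| ≤ x i / ∑' k, x k * p k + x j / ∑' k, x k * p k := by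
        rw [normalizedDiff, abs_div, abs_of_pos hS, ← add_div]
        gcongr
        exact abs_le.2 ⟨by linarith [hx i], by linarith [hx j]⟩
    _ ≤ 1 / p i + 1 / p j := add_le_add (div_tsum_mul_le hx hp hs i) (div_tsum_mul_le hx hp hs j)

lemma normalizedDiff_mul_swap (p x : ℕ → ℝ) (i j : ℕ) :
    normalizedDiff p i j x * normalizedDiff p i j (fun k => x (Equiv.swap i j k))
      = -((x i - x j) ^ 2 / ((∑' k, x k * p k) * ∑' k, x (Equiv.swap i j k) * p k)) := by
  simp only [normalizedDiff, Equiv.swap_apply_left, Equiv.swap_apply_right]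
  ring

/-- Swapping `x i` and `x j` moves the weighted sum by `(x j - x i) * (p i - p j)`. -/
lemma normalizedDiff_add_swap (hx : ∀ k, 0 < x k) (hp : ∀ k, 0 < p k)
    (hs : Summable fun k => x k * p k) {i j : ℕ} (hij : i ≠ j) :
    normalizedDiff p i j x + normalizedDiff p i j (fun k => x (Equiv.swap i j k))
      = (p i - p j) *
        (normalizedDiff p i j x * normalizedDiff p i j (fun k => x (Equiv.swap i j k))) := by
  have hswap := hs.hasSum.comp_swap_mul hij
  have hS := (tsum_mul_pos hx hp hs).ne'
  have hS' := (tsum_mul_pos (fun _ => hx _) hp hswap.summable).ne'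
  simp only [normalizedDiff, Equiv.swap_apply_left, Equiv.swap_apply_right] at hS' ⊢
  rw [hswap.tsum_eq] at hS' ⊢
  field_simp
  ring

end WeightedSum

section RandomWeights

variable {Ω : Type*} [MeasurableSpace Ω] {P : Measure Ω} {A : ℕ → Ω → ℝ} {p : ℕ → ℝ}

lemma ae_hasSum_mul_div_tsum (hA_pos : ∀ n ω, 0 < A n ω) (hp : ∀ n, 0 < p n)
    (hA_sum : ∀ᵐ ω ∂P, Summable fun k => A k ω * p k) :
    ∀ᵐ ω ∂P, HasSum (fun n => A n ω * p n / ∑' k, A k ω * p k) 1 := by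
  filter_upwards [hA_sum] with ω hω
  simpa only [div_self (tsum_mul_pos (fun k => hA_pos k ω) hp hω).ne'] using
    hω.hasSum.div_const (∑' k, A k ω * p k)

lemma hasSum_mul_integral_div_tsum_mul [IsFiniteMeasure P] (hA_meas : ∀ n, Measurable (A n))
    (hA_pos : ∀ n ω, 0 < A n ω) (hp : ∀ n, 0 < p n)
    (hA_sum : ∀ᵐ ω ∂P, Summable fun k => A k ω * p k) {r : ℕ → ℝ} {C : ℝ}
    (hr : ∀ n, |r n| ≤ C) :
    HasSum (fun n => p n * (∫ ω, A n ω / ∑' k, A k ω * p k ∂P) * r n)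
      (∫ ω, ∑' n, A n ω * p n / (∑' k, A k ω * p k) * r n ∂P) := by
  have hS_meas : Measurable fun ω => ∑' k, A k ω * p k :=
    Measurable.tsum fun k => (hA_meas k).mul_const (p k)
  convert hasSum_integral_mul_of_hasSum_one (F := fun n ω => A n ω * p n / ∑' k, A k ω * p k)
    (fun n => (((hA_meas n).mul_const (p n)).div hS_meas).aestronglyMeasurable)
    (fun n ω => div_nonneg (mul_pos (hA_pos n ω) (hp n)).le
      (tsum_nonneg fun k => (mul_pos (hA_pos k ω) (hp k)).le))
    (ae_hasSum_mul_div_tsum hA_pos hp hA_sum) hr using 2 with n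
  rw [← integral_const_mul]
  congr 2 with ω
  ring

lemma hasSum_mul_integral_div_tsum_mul_one [IsProbabilityMeasure P]
    (hA_meas : ∀ n, Measurable (A n)) (hA_pos : ∀ n ω, 0 < A n ω) (hp : ∀ n, 0 < p n)
    (hA_sum : ∀ᵐ ω ∂P, Summable fun k => A k ω * p k) :
    HasSum (fun n => p n * ∫ ω, A n ω / ∑' k, A k ω * p k ∂P) 1 := by
  have h := hasSum_mul_integral_div_tsum_mul hA_meas hA_pos hp hA_sum (r := 1) (C := 1)
    (fun _ => by simp)
  simp only [Pi.one_apply, mul_one] at h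
  rwa [integral_congr_ae ((ae_hasSum_mul_div_tsum hA_pos hp hA_sum).mono fun ω hω => hω.tsum_eq),
    integral_const, probReal_univ, one_smul] at h

lemma integrable_div_tsum_mul [IsFiniteMeasure P] (hA_meas : ∀ n, Measurable (A n))
    (hA_pos : ∀ n ω, 0 < A n ω) (hp : ∀ n, 0 < p n)
    (hA_sum : ∀ᵐ ω ∂P, Summable fun k => A k ω * p k) (n : ℕ) :
    Integrable (fun ω => A n ω / ∑' k, A k ω * p k) P := by
  refine Integrable.of_bound ((hA_meas n).div (Measurable.tsum fun k =>
    (hA_meas k).mul_const (p k))).aestronglyMeasurable (1 / p n) ?_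
  filter_upwards [hA_sum] with ω hω
  rw [Real.norm_of_nonneg (div_nonneg (hA_pos n ω).le
    (tsum_nonneg fun k => (mul_pos (hA_pos k ω) (hp k)).le))]
  exact div_tsum_mul_le (fun k => hA_pos k ω) hp hω n

lemma not_ae_eq_of_iIndepFun [IsProbabilityMeasure P] (hA_meas : ∀ n, Measurable (A n))
    (hA_indep : iIndepFun A P) (hA_ident : ∀ n, IdentDistrib (A n) (A 0) P P)
    (hA_nonconst : ∀ c : ℝ, ¬ ∀ᵐ ω ∂P, A 0 ω = c) {i j : ℕ} (hij : i ≠ j) :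
    ¬ A i =ᵐ[P] A j := fun hae => by
  obtain ⟨c, hc⟩ := IndepFun.exists_ae_eq_const_of_ae_eq (hA_meas i) (hA_indep.indepFun hij) hae
  exact hA_nonconst c ((hA_ident i).ae_mem_snd (measurableSet_singleton c) hc)

lemma integrable_normalizedDiff [IsFiniteMeasure P] (hA_meas : ∀ n, Measurable (A n))
    (hA_pos : ∀ n ω, 0 < A n ω) (hp : ∀ n, 0 < p n)
    (hA_sum : ∀ᵐ ω ∂P, Summable fun k => A k ω * p k) (i j : ℕ) :
    Integrable (fun ω => normalizedDiff p i j fun k => A k ω) P :=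
  .of_bound ((measurable_normalizedDiff p i j).comp
      (measurable_pi_lambda _ hA_meas)).aestronglyMeasurable _
    (hA_sum.mono fun ω h => abs_normalizedDiff_le (fun k => hA_pos k ω) hp h i j)

/-- The normalized difference of `A` and that of `A` with coordinates `i, j` swapped have the same
law, and their sum is `p i - p j` times their product. -/
lemma two_mul_integral_normalizedDiff [IsProbabilityMeasure P] (hA_meas : ∀ n, Measurable (A n))
    (hA_pos : ∀ n ω, 0 < A n ω) (hA_indep : iIndepFun A P)
    (hA_ident : ∀ n, IdentDistrib (A n) (A 0) P P)
    (hA_sum : ∀ᵐ ω ∂P, Summable fun k => A k ω * p k) (hp : ∀ n, 0 < p n) {i j : ℕ}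
    (hij : i ≠ j) :
    2 * ∫ ω, normalizedDiff p i j (fun k => A k ω) ∂P = (p i - p j) *
      ∫ ω, normalizedDiff p i j (fun k => A k ω) *
        normalizedDiff p i j (fun k => A (Equiv.swap i j k) ω) ∂P := by
  have hexch : ∫ ω, normalizedDiff p i j (fun k => A (Equiv.swap i j k) ω) ∂P
      = ∫ ω, normalizedDiff p i j (fun k => A k ω) ∂P :=
    iIndepFun.integral_comp_precomp hA_meas hA_indep (fun n => (hA_ident n).map_eq)
      (Equiv.swap i j).injective (measurable_normalizedDiff p i j)
  rw [two_mul, ← integral_const_mul]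
  nth_rw 2 [← hexch]
  rw [← integral_add (integrable_normalizedDiff hA_meas hA_pos hp hA_sum i j)
    (integrable_normalizedDiff (fun _ => hA_meas _) (fun _ => hA_pos _) hp
      (hA_sum.mono fun ω h => (h.hasSum.comp_swap_mul hij).summable) i j)]
  refine integral_congr_ae ?_
  filter_upwards [hA_sum] with ω h using normalizedDiff_add_swap (fun k => hA_pos k ω) hp h hij

lemma integral_normalizedDiff_mul_swap_neg [IsProbabilityMeasure P]
    (hA_meas : ∀ n, Measurable (A n)) (hA_pos : ∀ n ω, 0 < A n ω) (hA_indep : iIndepFun A P)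
    (hA_ident : ∀ n, IdentDistrib (A n) (A 0) P P)
    (hA_sum : ∀ᵐ ω ∂P, Summable fun k => A k ω * p k)
    (hA_nonconst : ∀ c : ℝ, ¬ ∀ᵐ ω ∂P, A 0 ω = c) (hp : ∀ n, 0 < p n) {i j : ℕ} (hij : i ≠ j) :
    ∫ ω, normalizedDiff p i j (fun k => A k ω) *
      normalizedDiff p i j (fun k => A (Equiv.swap i j k) ω) ∂P < 0 := by
  set σ := Equiv.swap i j
  have hsum_σ : ∀ᵐ ω ∂P, Summable fun k => A (σ k) ω * p k :=
    hA_sum.mono fun ω h => (h.hasSum.comp_swap_mul hij).summable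
  have hint := (integrable_normalizedDiff hA_meas hA_pos hp hA_sum i j).mul_bdd
    ((measurable_normalizedDiff p i j).comp
      (measurable_pi_lambda _ fun k => hA_meas (σ k))).aestronglyMeasurable
    (hsum_σ.mono fun ω h => abs_normalizedDiff_le (fun k => hA_pos (σ k) ω) hp h i j)
  have hnonpos : ∀ ω, normalizedDiff p i j (fun k => A k ω) *
      normalizedDiff p i j (fun k => A (σ k) ω) ≤ 0 := fun ω => by
    rw [normalizedDiff_mul_swap]
    exact neg_nonpos.2 (div_nonneg (sq_nonneg _) (mul_nonneg
      (tsum_nonneg fun k => (mul_pos (hA_pos k ω) (hp k)).le)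
      (tsum_nonneg fun k => (mul_pos (hA_pos _ ω) (hp k)).le)))
  refine (integral_nonpos hnonpos).lt_of_ne fun h0 => ?_
  refine not_ae_eq_of_iIndepFun hA_meas hA_indep hA_ident hA_nonconst hij ?_
  have hzero :=
    (integral_eq_zero_iff_of_nonneg (fun ω => neg_nonneg.2 (hnonpos ω)) hint.neg).1
      (by rw [integral_neg, h0, neg_zero])
  filter_upwards [hzero, hA_sum, hsum_σ] with ω h hs hs_σ
  have hS := (tsum_mul_pos (fun k => hA_pos k ω) hp hs).ne'
  have hS_σ := (tsum_mul_pos (fun k => hA_pos (σ k) ω) hp hs_σ).ne'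
  rw [Pi.zero_apply, normalizedDiff_mul_swap, neg_neg, div_eq_zero_iff] at h
  exact sub_eq_zero.1 (pow_eq_zero_iff two_ne_zero |>.1 (h.resolve_right (mul_ne_zero hS hS_σ)))

lemma exists_neg_integral_div_tsum_sub [IsProbabilityMeasure P] (hA_meas : ∀ n, Measurable (A n))
    (hA_pos : ∀ n ω, 0 < A n ω) (hA_indep : iIndepFun A P)
    (hA_ident : ∀ n, IdentDistrib (A n) (A 0) P P)
    (hA_sum : ∀ᵐ ω ∂P, Summable fun k => A k ω * p k)
    (hA_nonconst : ∀ c : ℝ, ¬ ∀ᵐ ω ∂P, A 0 ω = c) (hp : ∀ n, 0 < p n) (i j : ℕ) :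
    ∃ K < 0, (∫ ω, A i ω / ∑' k, A k ω * p k ∂P) - (∫ ω, A j ω / ∑' k, A k ω * p k ∂P)
      = K * (p i - p j) := by
  rcases eq_or_ne i j with rfl | hij
  · exact ⟨-1, neg_one_lt_zero, by simp⟩
  have hdiff : (∫ ω, A i ω / ∑' k, A k ω * p k ∂P) - (∫ ω, A j ω / ∑' k, A k ω * p k ∂P)
      = ∫ ω, normalizedDiff p i j (fun k => A k ω) ∂P := by
    rw [← integral_sub (integrable_div_tsum_mul hA_meas hA_pos hp hA_sum i)
      (integrable_div_tsum_mul hA_meas hA_pos hp hA_sum j)]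
    simp only [normalizedDiff, sub_div]
  refine ⟨_, div_neg_of_neg_of_pos (integral_normalizedDiff_mul_swap_neg hA_meas hA_pos
    hA_indep hA_ident hA_sum hA_nonconst hp hij) two_pos, ?_⟩
  linear_combination hdiff + two_mul_integral_normalizedDiff hA_meas hA_pos hA_indep hA_ident
    hA_sum hp hij / 2

end RandomWeights

theorem perturbation_lt_general
    {Ω : Type*} [MeasurableSpace Ω] (P : Measure Ω) [IsProbabilityMeasure P]
    (p q : ℕ → ℝ) (hp_anti : Antitone p) (hq_anti : Antitone q)
    (hq_nonneg : ∀ n, 0 ≤ q n)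
    (hp_sum : HasSum p 1)
    (A : ℕ → Ω → ℝ) (hA_meas : ∀ n, Measurable (A n))
    (hA_pos : ∀ n ω, 0 < A n ω)
    (hA_indep : iIndepFun A P)
    (hA_ident : ∀ n, IdentDistrib (A n) (A 0) P P)
    (hA_sum : ∀ᵐ ω ∂P, Summable (fun n => A n ω * p n))
    (hA_nonconst : ∀ c : ℝ, ¬ (∀ᵐ ω ∂P, A 0 ω = c))
    (hq_nonconst : ∃ m n, q m ≠ q n)
    (hp_pos : ∀ n, 0 < p n) :
    ∫ ω, (∑' n, (A n ω * p n / ∑' k, A k ω * p k) * q n) ∂P < ∑' n, p n * q n := by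
  set c : ℕ → ℝ := fun n => ∫ ω, A n ω / ∑' k, A k ω * p k ∂P
  have hmean := hasSum_mul_integral_div_tsum_mul hA_meas hA_pos hp_pos hA_sum (r := q) (C := q 0)
    fun n => (abs_of_nonneg (hq_nonneg n)).trans_le (hq_anti n.zero_le)
  have hpc : HasSum (fun n => p n * c n) 1 :=
    hasSum_mul_integral_div_tsum_mul_one hA_meas hA_pos hp_pos hA_sum
  have hcp : ∀ i j, ∃ K < 0, c i - c j = K * (p i - p j) :=
    exists_neg_integral_div_tsum_sub hA_meas hA_pos hA_indep hA_ident hA_sum hA_nonconst hp_pos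
  have hc_mono : Monotone c := fun i j hij => by
    obtain ⟨K, hK, h⟩ := hcp i j
    nlinarith [hp_anti hij]
  obtain ⟨m, hm⟩ : ∃ m, q m < q 0 := by
    obtain ⟨m, n, hmn⟩ := hq_nonconst
    by_contra! h
    exact hmn (((hq_anti m.zero_le).antisymm (h m)).trans ((hq_anti n.zero_le).antisymm (h n)).symm)
  obtain ⟨j, hjm, hpj⟩ := ((eventually_ge_atTop m).and
    (hp_sum.summable.tendsto_atTop_zero.eventually (gt_mem_nhds (hp_pos 0)))).exists
  have hcj : c 0 < c j := by
    obtain ⟨K, hK, h⟩ := hcp 0 j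
    nlinarith
  have hpq : Summable fun n => p n * q n :=
    (hp_sum.summable.mul_right (q 0)).of_nonneg_of_le
      (fun n => mul_nonneg (hp_pos n).le (hq_nonneg n))
      (fun n => mul_le_mul_of_nonneg_left (hq_anti n.zero_le) (hp_pos n).le)
  have hgap := pos_of_hasSum_mul_mul_of_antitone hp_pos hq_anti (b := fun n => 1 - c n)
    (fun i j hij => sub_le_sub_left (hc_mono hij) 1)
    (by simpa only [mul_sub, mul_one, sub_self] using hp_sum.sub hpc)
    (by simpa only [mul_sub, mul_one, mul_right_comm] using hpq.hasSum.sub hmean)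
    ((hq_anti hjm).trans_lt hm) (sub_lt_sub_left hcj 1)
  linarith

/-- **Perturbation lemma (strict).** Under the hypotheses of the perturbation lemma,
if moreover `A 0` is not a.s. constant, `(q n)` is not constant and all `p n > 0`,
then the inequality is strict: `𝔼[∑ p̃ n q n] < ∑ p n q n`. -/
theorem perturbation_lt
    {Ω : Type*} [MeasurableSpace Ω] (P : Measure Ω) [IsProbabilityMeasure P]
    (p q : ℕ → ℝ) (hp_anti : Antitone p) (hq_anti : Antitone q)
    (hp_nonneg : ∀ n, 0 ≤ p n) (hq_nonneg : ∀ n, 0 ≤ q n)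
    (hp_sum : HasSum p 1)
    (A : ℕ → Ω → ℝ) (hA_meas : ∀ n, Measurable (A n))
    (hA_pos : ∀ n ω, 0 < A n ω)
    (hA_indep : iIndepFun A P)
    (hA_ident : ∀ n, IdentDistrib (A n) (A 0) P P)
    (hA_sum : ∀ᵐ ω ∂P, Summable (fun n => A n ω * p n))
    (hA_nonconst : ∀ c : ℝ, ¬ (∀ᵐ ω ∂P, A 0 ω = c))
    (hq_nonconst : ∃ m n, q m ≠ q n)
    (hp_pos : ∀ n, 0 < p n) :
    ∫ ω, (∑' n, (A n ω * p n / ∑' k, A k ω * p k) * q n) ∂P < ∑' n, p n * q n :=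
  perturbation_lt_general P p q hp_anti hq_anti hq_nonneg hp_sum A hA_meas hA_pos hA_indep hA_ident
    hA_sum hA_nonconst hq_nonconst hp_pos
end

section
/- Let $(p_n)_{n\ge1}$ be a nonincreasing summable sequence of positive reals and $(A_n)_{n\ge1}$ i.i.d. positive random variables with $\sum_n A_n p_n < \infty$ a.s. and $\mathbb{E}[A_n / \sum_j A_j p_j] < \infty$. Then the sequence $y_n := \mathbb{E}\big[A_n / \sum_{j\ge1} A_j p_j\big]$ is nondecreasing in $n$. -/
open MeasureTheory ProbabilityTheory Filter

/-! For `m < n` let `σ` swap `m` and `n`. The `A j` being i.i.d., the sequence `(A (σ j))` has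
the same law as `(A j)`; with `S = ∑ A j p j` and `S' = ∑ A (σ j) p j` this gives
`𝔼[(A n - A m) / S] = 𝔼[(A m - A n) / S']`. Since `S' = S + (A n - A m) (p m - p n)`,
`2 (y n - y m) = 𝔼[(A n - A m) / S + (A m - A n) / S'] = 𝔼[(A n - A m)² (p m - p n) / (S S')] ≥ 0`. -/

theorem ProbabilityTheory.iIndepFun.map_comp_perm_eq {ι Ω β : Type*} [MeasurableSpace Ω]
    [MeasurableSpace β] {P : Measure Ω} [IsProbabilityMeasure P] {A : ι → Ω → β}
    (hA_meas : ∀ i, Measurable (A i)) (hA : iIndepFun A P) (σ : Equiv.Perm ι)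
    (hσ : ∀ i, IdentDistrib (A (σ i)) (A i) P P) :
    P.map (fun ω i => A (σ i) ω) = P.map (fun ω i => A i ω) := by
  rw [(hA.precomp σ.injective).map_fun_eq_infinitePi_map fun i => hA_meas (σ i),
    hA.map_fun_eq_infinitePi_map hA_meas]
  congr 1
  funext i
  exact (hσ i).map_eq

theorem HasSum.mul_comp_swap {ι R : Type*} [DecidableEq ι] [CommRing R] [TopologicalSpace R]
    [ContinuousAdd R] {x p : ι → R} {s : R} (h : HasSum (fun i => x i * p i) s) {m n : ι}
    (hmn : m ≠ n) :
    HasSum (fun i => x (Equiv.swap m n i) * p i) (s + (x n - x m) * (p m - p n)) := by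
  have hc : HasSum (fun i => (x (Equiv.swap m n i) - x i) * p i)
      (∑ i ∈ {m, n}, (x (Equiv.swap m n i) - x i) * p i) :=
    hasSum_sum_of_ne_finset_zero fun i hi => by
      simp only [Finset.mem_insert, Finset.mem_singleton, not_or] at hi
      rw [Equiv.swap_apply_of_ne_of_ne hi.1 hi.2, sub_self, zero_mul]
  rw [Finset.sum_pair hmn, Equiv.swap_apply_left, Equiv.swap_apply_right] at hc
  convert h.add hc using 1
  · ext i
    ring
  · ring

theorem div_tsum_add_div_tsum_swap_nonneg {ι : Type*} [DecidableEq ι] {x p : ι → ℝ}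
    (hx : ∀ i, 0 < x i) (hp : ∀ i, 0 < p i) (hs : Summable fun i => x i * p i) {m n : ι}
    (hmn : m ≠ n) (hpmn : p n ≤ p m) :
    0 ≤ (x n - x m) / ∑' i, x i * p i + (x m - x n) / ∑' i, x (Equiv.swap m n i) * p i := by
  have hswap := hs.hasSum.mul_comp_swap hmn
  have hS : 0 < ∑' i, x i * p i := hs.tsum_pos (fun i => (mul_pos (hx i) (hp i)).le) m
    (mul_pos (hx m) (hp m))
  have hS' : 0 < ∑' i, x (Equiv.swap m n i) * p i := hswap.summable.tsum_pos
    (fun i => (mul_pos (hx _) (hp i)).le) m (mul_pos (hx _) (hp m))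
  rw [hswap.tsum_eq] at hS' ⊢
  set S := ∑' i, x i * p i
  have hcombine : (x n - x m) / S + (x m - x n) / (S + (x n - x m) * (p m - p n))
      = (x n - x m) ^ 2 * (p m - p n) / (S * (S + (x n - x m) * (p m - p n))) := by
    field_simp
    ring
  rw [hcombine]
  have := sub_nonneg.2 hpmn
  positivity

theorem integral_nonneg_of_map_eq_of_add_comp_nonneg {Ω α : Type*} [MeasurableSpace Ω]
    [MeasurableSpace α] {P : Measure Ω} {X : Ω → α} {T : α → α} {g : α → ℝ}
    (hX : AEMeasurable X P) (hT : Measurable T) (hTX : P.map (T ∘ X) = P.map X)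
    (hg : AEStronglyMeasurable g (P.map X)) (hgX : Integrable (fun ω => g (X ω)) P)
    (hsym : ∀ᵐ ω ∂P, 0 ≤ g (X ω) + g (T (X ω))) :
    0 ≤ ∫ ω, g (X ω) ∂P := by
  have hTX_meas : AEMeasurable (T ∘ X) P := hT.comp_aemeasurable hX
  have hg' : AEStronglyMeasurable g (P.map (T ∘ X)) := hTX ▸ hg
  have hgTX : Integrable (fun ω => g (T (X ω))) P :=
    (integrable_map_measure hg' hTX_meas).1 (hTX ▸ (integrable_map_measure hg hX).2 hgX)
  have hcomp : ∫ ω, g (T (X ω)) ∂P = ∫ ω, g (X ω) ∂P := calc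
    _ = ∫ y, g y ∂P.map (T ∘ X) := (integral_map hTX_meas hg').symm
    _ = ∫ y, g y ∂P.map X := by rw [hTX]
    _ = _ := integral_map hX hg
  have := integral_nonneg_of_ae hsym
  rw [integral_add hgX hgTX, hcomp] at this
  linarith

theorem y_monotone_general
    {Ω : Type*} [MeasurableSpace Ω] (P : Measure Ω) [IsProbabilityMeasure P]
    (p : ℕ → ℝ) (hp_anti : Antitone p) (hp_pos : ∀ n, 0 < p n)
    (A : ℕ → Ω → ℝ) (hA_meas : ∀ n, Measurable (A n))
    (hA_pos : ∀ n ω, 0 < A n ω)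
    (hA_indep : iIndepFun A P)
    (hA_ident : ∀ n, IdentDistrib (A n) (A 0) P P)
    (hA_sum : ∀ᵐ ω ∂P, Summable (fun j => A j ω * p j))
    (hInt : ∀ n, Integrable (fun ω => A n ω / ∑' j, A j ω * p j) P) :
    Monotone (fun n => ∫ ω, A n ω / ∑' j, A j ω * p j ∂P) := by
  intro m n hmn
  obtain rfl | hne := eq_or_ne m n
  · exact le_rfl
  set σ := Equiv.swap m n
  let g : (ℕ → ℝ) → ℝ := fun x => (x n - x m) / ∑' j, x j * p j
  have hg : Measurable g := ((measurable_pi_apply n).sub (measurable_pi_apply m)).div <|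
    .tsum fun j => by fun_prop
  have hgX : ∀ ω, g (fun j => A j ω) = A n ω / ∑' j, A j ω * p j - A m ω / ∑' j, A j ω * p j :=
    fun ω => sub_div _ _ _
  have hgXσ : ∀ ω, g (fun j => A (σ j) ω) = (A m ω - A n ω) / ∑' j, A (σ j) ω * p j :=
    fun ω => by simp only [g, σ, Equiv.swap_apply_left, Equiv.swap_apply_right]
  have hexch : P.map ((· ∘ σ) ∘ fun ω j => A j ω) = P.map fun ω j => A j ω :=
    hA_indep.map_comp_perm_eq hA_meas σ fun i => (hA_ident (σ i)).trans (hA_ident i).symm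
  have key := integral_nonneg_of_map_eq_of_add_comp_nonneg
    (measurable_pi_lambda _ hA_meas).aemeasurable
    (measurable_pi_lambda _ fun j => measurable_pi_apply (σ j)) hexch hg.aestronglyMeasurable
    (((hInt n).sub (hInt m)).congr (.of_forall fun ω => (hgX ω).symm)) <| by
      filter_upwards [hA_sum] with ω hω
      rw [hgXσ]
      exact div_tsum_add_div_tsum_swap_nonneg (hA_pos · ω) hp_pos hω hne (hp_anti hmn)
  rwa [integral_congr_ae (.of_forall hgX), integral_sub (hInt n) (hInt m), sub_nonneg] at key

/-- **Monotonicity of `y n = 𝔼[A n / ∑ A j p j]`.** If `(p n)` is a nonincreasing summable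
sequence of positive reals and `(A n)` are i.i.d. positive random variables with
`∑ A j p j < ∞` a.s. and integrable ratios, then `n ↦ 𝔼[A n / ∑ A j p j]` is nondecreasing. -/
theorem y_monotone
    {Ω : Type*} [MeasurableSpace Ω] (P : Measure Ω) [IsProbabilityMeasure P]
    (p : ℕ → ℝ) (hp_anti : Antitone p) (hp_pos : ∀ n, 0 < p n) (hp_sum : Summable p)
    (A : ℕ → Ω → ℝ) (hA_meas : ∀ n, Measurable (A n))
    (hA_pos : ∀ n ω, 0 < A n ω)
    (hA_indep : iIndepFun A P)
    (hA_ident : ∀ n, IdentDistrib (A n) (A 0) P P)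
    (hA_sum : ∀ᵐ ω ∂P, Summable (fun j => A j ω * p j))
    (hInt : ∀ n, Integrable (fun ω => A n ω / ∑' j, A j ω * p j) P) :
    Monotone (fun n => ∫ ω, A n ω / ∑' j, A j ω * p j ∂P) :=
  y_monotone_general P p hp_anti hp_pos A hA_meas hA_pos hA_indep hA_ident hA_sum hInt
end
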